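/- arXiv:0812.2734 — 6 statements merged into one kernel-verified Lean document; each statement's English description precedes it below -/
import Mathlib

section
/- In a chordal graph, every minimal separator is a clique. -/
open SimpleGraph

variable {V : Type*}

/-- A graph is chordal if it contains no induced cycle of length at least four. -/
def IsChordal (G : SimpleGraph V) : Prop :=
  ∀ n : ℕ, 4 ≤ n → IsEmpty (SimpleGraph.cycleGraph n ↪g G)

/-- `S` separates `u` from `v`: every walk from `u` to `v` meets `S`, and `u, v ∉ S`. -/
def IsSeparator (G : SimpleGraph V) (u v : V) (S : Set V) : Prop :=
  u ∉ S ∧ v ∉ S ∧ ∀ p : G.Walk u v, ∃ x ∈ p.support, x ∈ S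

/-- A `{u,v}`-separator: a separator of `u,v` minimal with this property. -/
def IsMinUVSeparator (G : SimpleGraph V) (u v : V) (S : Set V) : Prop :=
  IsSeparator G u v S ∧ ∀ T, T ⊂ S → ¬ IsSeparator G u v T

/-- A minimal separator: a `{u,v}`-separator for some non-adjacent pair `u ≠ v`. -/
def IsMinimalSeparator (G : SimpleGraph V) (S : Set V) : Prop :=
  ∃ u v, u ≠ v ∧ ¬ G.Adj u v ∧ IsMinUVSeparator G u v S

/-- A maximal clique. -/
def IsMaxClique (G : SimpleGraph V) (Q : Set V) : Prop :=
  G.IsClique Q ∧ ∀ R, G.IsClique R → Q ⊆ R → Q = R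

abbrev MaxClique (G : SimpleGraph V) := {Q : Set V // IsMaxClique G Q}

/-- A clique tree of `G`: a tree on the maximal cliques of `G` such that for every
vertex `v` the maximal cliques containing `v` induce a (nonempty connected) subtree. -/
structure CliqueTree (G : SimpleGraph V) where
  tree : SimpleGraph (MaxClique G)
  isTree : tree.IsTree
  subtree : ∀ v : V, ((tree.induce {Q : MaxClique G | v ∈ Q.1})).Connected

/-- An asteroidal triple: three pairwise non-adjacent vertices such that any two are
joined by a path avoiding the closed neighborhood of the third. -/
def IsAsteroidalTriple (G : SimpleGraph V) (a b c : V) : Prop :=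
  a ≠ b ∧ b ≠ c ∧ a ≠ c ∧ ¬ G.Adj a b ∧ ¬ G.Adj b c ∧ ¬ G.Adj a c ∧
  (∃ p : G.Walk a b, ∀ x ∈ p.support, x ≠ c ∧ ¬ G.Adj c x) ∧
  (∃ p : G.Walk b c, ∀ x ∈ p.support, x ≠ a ∧ ¬ G.Adj a x) ∧
  (∃ p : G.Walk a c, ∀ x ∈ p.support, x ≠ b ∧ ¬ G.Adj b x)

/-!
Let `S` be a minimal `u`–`v` separator and let `A`, `B` be the vertex sets of the components of
`u` and `v` in `G - S`. Minimality forces every `w ∈ S` to have a neighbour in `A` and one in `B`.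
If `x, y ∈ S` were non-adjacent, a shortest `x`–`y` path with interior in `A` and one with
interior in `B` are chordless, share only their ends and have no edges between their interiors,
so together they form a chordless cycle of length at least four.
-/

lemma Fin.val_sub_eq_one_iff {n : ℕ} (hn : 2 ≤ n) (a b : Fin n) :
    (a - b).val = 1 ↔ a.val = (b.val + 1) % n := by
  have ha := a.isLt
  have hb := b.isLt
  have hmod : (b.val + 1) % n = if b.val + 1 < n then b.val + 1 else 0 := by
    split_ifs with h
    · exact Nat.mod_eq_of_lt h
    · rw [show b.val + 1 = n by omega, Nat.mod_self]
  rw [hmod]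
  rcases le_or_gt b a with hba | hab
  · rw [Fin.sub_val_of_le hba]
    rw [Fin.le_def] at hba
    split_ifs <;> omega
  · rw [Fin.coe_sub_iff_lt.mpr hab]
    rw [Fin.lt_def] at hab
    split_ifs <;> omega

namespace SimpleGraph

namespace Walk

variable {G : SimpleGraph V} {u v w : V}

lemma IsPath.ne_of_mem_support_tail {p : G.Walk u v} (hp : p.IsPath) {z : V}
    (hz : z ∈ p.support.tail) : z ≠ u := by
  rintro rfl
  have hnodup := hp.support_nodup
  rw [← cons_tail_support, List.nodup_cons] at hnodup
  exact hnodup.1 hz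

lemma IsChordless.reverse {p : G.Walk u v} (hp : p.IsChordless) : p.reverse.IsChordless := by
  rw [isChordless_iff_forall_mem_edges] at hp ⊢
  intro a b ha hb hab
  simp only [support_reverse, List.mem_reverse, edges_reverse] at ha hb ⊢
  exact hp ha hb hab

lemma IsChordless.append {p : G.Walk u v} {q : G.Walk v w} (hp : p.IsChordless)
    (hq : q.IsChordless)
    (hpq : ∀ a ∈ p.support, ∀ b ∈ q.support, G.Adj a b → a ∈ q.support ∨ b ∈ p.support) :
    (p.append q).IsChordless := by
  rw [isChordless_iff_forall_mem_edges] at hp hq ⊢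
  intro a b ha hb hab
  rw [mem_support_append_iff] at ha hb
  rw [edges_append, List.mem_append]
  rcases ha with ha | ha <;> rcases hb with hb | hb
  · exact .inl (hp ha hb hab)
  · rcases hpq a ha b hb hab with ha' | hb'
    · exact .inr (hq ha' hb hab)
    · exact .inl (hp ha hb' hab)
  · rcases hpq b hb a ha hab.symm with hb' | ha'
    · exact .inr (hq ha hb' hab)
    · exact .inl (hp ha' hb hab)
  · exact .inr (hq ha hb hab)

lemma exists_length_lt_of_adj_getVert (p : G.Walk u v) {i j : ℕ} (hij : i + 1 < j)
    (hj : j ≤ p.length) (h : G.Adj (p.getVert i) (p.getVert j)) :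
    ∃ q : G.Walk u v, q.length < p.length ∧ ∀ z ∈ q.support, z ∈ p.support := by
  refine ⟨(p.take i).append (cons h (p.drop j)), ?_, fun z hz => ?_⟩
  · simp only [length_append, take_length, length_cons, drop_length]
    omega
  · rw [mem_support_append_iff, support_cons, List.mem_cons, support_take,
      drop_support_eq_support_drop_min] at hz
    rcases hz with hz | rfl | hz
    · exact List.mem_of_mem_take hz
    · exact p.getVert_mem_support i
    · exact List.mem_of_mem_drop hz

lemma IsChord.exists_length_lt {p : G.Walk u v} {e : Sym2 V} (he : p.IsChord e) :
    ∃ q : G.Walk u v, q.length < p.length ∧ ∀ z ∈ q.support, z ∈ p.support := by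
  induction e using Sym2.ind with | h a b => ?_
  obtain ⟨hab, hnotEdge, ha, hb⟩ := isChord_sym2Mk.mp he
  obtain ⟨i, rfl, hi⟩ := mem_support_iff_exists_getVert.mp ha
  obtain ⟨j, rfl, hj⟩ := mem_support_iff_exists_getVert.mp hb
  have hstep : ∀ k < p.length, s(p.getVert k, p.getVert (k + 1)) ∈ p.edges :=
    fun k hk => (mk_mem_edges_iff_exists p).mpr ⟨k, hk, rfl⟩
  rcases lt_or_ge (i + 1) j with hij | hji
  · exact p.exists_length_lt_of_adj_getVert hij hj hab
  rcases lt_or_ge (j + 1) i with hji' | hij'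
  · exact p.exists_length_lt_of_adj_getVert hji' hi hab.symm
  obtain rfl | rfl | rfl : j = i ∨ j = i + 1 ∨ i = j + 1 := by omega
  · exact absurd rfl hab.ne
  · exact absurd (hstep i (by omega)) hnotEdge
  · exact absurd (Sym2.eq_swap ▸ hstep j (by omega)) hnotEdge

lemma exists_isPath_isChordless_of_support_subset (W : Set V) (q : G.Walk u v)
    (hq : ∀ z ∈ q.support, z ∈ W) :
    ∃ p : G.Walk u v, p.IsPath ∧ p.IsChordless ∧ ∀ z ∈ p.support, z ∈ W := by
  classical
  have hex : ∃ n, ∃ r : G.Walk u v, r.length = n ∧ ∀ z ∈ r.support, z ∈ W := ⟨_, q, rfl, hq⟩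
  obtain ⟨p, hpn, hpW⟩ := Nat.find_spec hex
  have hmin : ∀ r : G.Walk u v, (∀ z ∈ r.support, z ∈ W) → p.length ≤ r.length :=
    fun r hr => hpn ▸ Nat.find_min' hex ⟨r, rfl, hr⟩
  have hbypassW : ∀ z ∈ p.bypass.support, z ∈ W :=
    fun z hz => hpW z (p.support_bypass_subset_support hz)
  refine ⟨p.bypass, p.bypass_isPath, fun e he => ?_, hbypassW⟩
  obtain ⟨r, hr, hrs⟩ := he.exists_length_lt
  have := hmin r fun z hz => hbypassW z (hrs z hz)
  have := p.length_bypass_le_length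
  omega

lemma IsCycle.isIndContained_cycleGraph {p : G.Walk u u} (hp : p.IsCycle)
    (hc : p.IsChordless) : cycleGraph p.length ⊴ G := by
  set n := p.length
  have h3 : 3 ≤ n := hp.three_le_length
  have hinj : ∀ i < n, ∀ j < n, p.getVert i = p.getVert j → i = j := fun i hi j hj h =>
    hp.getVert_injOn' (by simp only [Set.mem_ofPred_eq]; omega)
      (by simp only [Set.mem_ofPred_eq]; omega) h
  have hwrap : ∀ k < n, p.getVert ((k + 1) % n) = p.getVert (k + 1) := by
    intro k hk
    rcases (show k + 1 < n ∨ k + 1 = n by omega) with h | h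
    · rw [Nat.mod_eq_of_lt h]
    · rw [h, Nat.mod_self, getVert_zero, getVert_length]
  have hf : Function.Injective fun i : Fin n => p.getVert i := by
    intro i j h
    exact Fin.ext (hinj _ i.2 _ j.2 h)
  refine ⟨⟨⟨fun i => p.getVert i, hf⟩, ?_⟩⟩
  intro i j
  simp only [Function.Embedding.coeFn_mk]
  rw [cycleGraph_adj', Fin.val_sub_eq_one_iff (by omega), Fin.val_sub_eq_one_iff (by omega)]
  constructor
  · intro h
    obtain ⟨k, hk, hke⟩ := (mk_mem_edges_iff_exists p).mp
      (hc.mem_edges (p.getVert_mem_support _) (p.getVert_mem_support _) h)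
    have hk' : (k + 1) % n < n := Nat.mod_lt _ (by omega)
    rw [← hwrap k hk, Sym2.eq_iff] at hke
    rcases hke with ⟨h1, h2⟩ | ⟨h1, h2⟩
    · right
      rw [← hinj _ hk _ i.2 h1, hinj _ hk' _ j.2 h2]
    · left
      rw [← hinj _ hk _ j.2 h1, hinj _ hk' _ i.2 h2]
  · rintro (h | h)
    · rw [h, hwrap _ j.2]
      exact (p.adj_getVert_succ j.2).symm
    · rw [h, hwrap _ i.2]
      exact p.adj_getVert_succ i.2

end Walk

end SimpleGraph

section Chordal

open Walk

variable {G : SimpleGraph V}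

lemma IsChordal.length_lt_four (hG : IsChordal G) {u : V} {p : G.Walk u u}
    (hp : p.IsCycle) (hc : p.IsChordless) : p.length < 4 := by
  by_contra h
  obtain ⟨e⟩ := hp.isIndContained_cycleGraph hc
  exact (hG _ (not_lt.mp h)).false e

theorem IsChordal.adj_of_walks_through_disjoint (hG : IsChordal G) {A B : Set V}
    (hAB : Disjoint A B) (hnadj : ∀ a ∈ A, ∀ b ∈ B, ¬ G.Adj a b) {x y : V} (hxy : x ≠ y)
    (p : G.Walk x y) (hp : ∀ z ∈ p.support, z ∈ insert x (insert y A))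
    (q : G.Walk x y) (hq : ∀ z ∈ q.support, z ∈ insert x (insert y B)) : G.Adj x y := by
  by_contra hadj
  obtain ⟨P, hP, hPc, hPA⟩ := exists_isPath_isChordless_of_support_subset _ p hp
  obtain ⟨Q, hQ, hQc, hQB⟩ := exists_isPath_isChordless_of_support_subset _ q hq
  have two_le_length (r : G.Walk x y) : 2 ≤ r.length := by
    by_contra h
    obtain h0 | h1 : r.length = 0 ∨ r.length = 1 := by omega
    · exact hxy (eq_of_length_eq_zero h0)
    · exact hadj (adj_of_length_eq_one h1)
  have hPQ : ∀ z ∈ P.support, z ∈ Q.support → z = x ∨ z = y := by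
    intro z hzP hzQ
    rcases hPA z hzP with rfl | rfl | hzA
    · exact .inl rfl
    · exact .inr rfl
    rcases hQB z hzQ with rfl | rfl | hzB
    · exact .inl rfl
    · exact .inr rfl
    · exact (Set.disjoint_left.mp hAB hzA hzB).elim
  have hcycle : (P.append Q.reverse).IsCycle := by
    refine hP.isCycle_append hQ.reverse (List.disjoint_left.mpr fun z hzP hzQ => ?_)
      (.inl (by have := two_le_length P; omega))
    have hzx := hP.ne_of_mem_support_tail hzP
    have hzy := hQ.reverse.ne_of_mem_support_tail hzQ
    rw [support_reverse] at hzQ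
    rcases hPQ z (List.mem_of_mem_tail hzP)
      (List.mem_reverse.mp (List.mem_of_mem_tail hzQ)) with rfl | rfl
    · exact hzx rfl
    · exact hzy rfl
  have hchordless : (P.append Q.reverse).IsChordless := by
    refine hPc.append hQc.reverse fun a ha b hb hab => ?_
    rw [support_reverse, List.mem_reverse] at hb ⊢
    rcases hPA a ha with rfl | rfl | haA
    · exact .inl Q.start_mem_support
    · exact .inl Q.end_mem_support
    rcases hQB b hb with rfl | rfl | hbB
    · exact .inr P.start_mem_support
    · exact .inr P.end_mem_support
    · exact (hnadj a haA b hbB hab).elim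
  have := hG.length_lt_four hcycle hchordless
  rw [length_append, length_reverse] at this
  have := two_le_length P
  have := two_le_length Q
  omega

end Chordal

/-- The vertex set of the component of `u` in `G - S`; empty if `u ∈ S`. -/
def reachAvoiding (G : SimpleGraph V) (S : Set V) (u : V) : Set V :=
  {w | ∃ q : G.Walk u w, ∀ z ∈ q.support, z ∉ S}

section reachAvoiding

open Walk

variable {G : SimpleGraph V} {S : Set V} {u v : V}

lemma notMem_of_mem_reachAvoiding {w : V} (hw : w ∈ reachAvoiding G S u) : w ∉ S := by
  obtain ⟨q, hq⟩ := hw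
  exact hq w q.end_mem_support

lemma mem_reachAvoiding_of_mem_support {w z : V} (q : G.Walk u w)
    (hq : ∀ z ∈ q.support, z ∉ S) (hz : z ∈ q.support) : z ∈ reachAvoiding G S u := by
  classical
  exact ⟨q.takeUntil z hz, fun a ha => hq a (q.support_takeUntil_subset_support hz ha)⟩

lemma mem_reachAvoiding_of_adj {a b : V} (ha : a ∈ reachAvoiding G S u) (hab : G.Adj a b)
    (hb : b ∉ S) : b ∈ reachAvoiding G S u := by
  obtain ⟨q, hq⟩ := ha
  refine ⟨q.concat hab, fun z hz => ?_⟩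
  rw [support_concat, List.mem_append, List.mem_singleton] at hz
  rcases hz with hz | rfl
  · exact hq z hz
  · exact hb

lemma exists_walk_through_reachAvoiding {x y a b : V} (hxa : G.Adj x a)
    (ha : a ∈ reachAvoiding G S u) (hb : b ∈ reachAvoiding G S u) (hby : G.Adj b y) :
    ∃ q : G.Walk x y, ∀ z ∈ q.support, z ∈ insert x (insert y (reachAvoiding G S u)) := by
  obtain ⟨qa, hqa⟩ := ha
  obtain ⟨qb, hqb⟩ := hb
  refine ⟨cons hxa (qa.reverse.append (qb.concat hby)), fun z hz => ?_⟩
  simp only [support_cons, List.mem_cons, mem_support_append_iff, support_reverse,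
    List.mem_reverse, support_concat, List.mem_append, List.mem_nil_iff, or_false] at hz
  rcases hz with rfl | hz | hz | rfl
  · exact .inl rfl
  · exact .inr (.inr (mem_reachAvoiding_of_mem_support qa hqa hz))
  · exact .inr (.inr (mem_reachAvoiding_of_mem_support qb hqb hz))
  · exact .inr (.inl rfl)

lemma IsSeparator.symm (h : IsSeparator G u v S) : IsSeparator G v u S :=
  ⟨h.2.1, h.1, fun p => by simpa using h.2.2 p.reverse⟩

lemma IsMinUVSeparator.symm (h : IsMinUVSeparator G u v S) : IsMinUVSeparator G v u S :=
  ⟨h.1.symm, fun T hT hsep => h.2 T hT hsep.symm⟩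

lemma IsSeparator.disjoint_reachAvoiding (h : IsSeparator G u v S) :
    Disjoint (reachAvoiding G S u) (reachAvoiding G S v) := by
  rw [Set.disjoint_left]
  rintro w ⟨qu, hqu⟩ ⟨qv, hqv⟩
  obtain ⟨z, hz, hzS⟩ := h.2.2 (qu.append qv.reverse)
  rw [mem_support_append_iff, support_reverse, List.mem_reverse] at hz
  rcases hz with hz | hz
  · exact hqu z hz hzS
  · exact hqv z hz hzS

lemma IsSeparator.not_adj_of_mem_reachAvoiding (h : IsSeparator G u v S) {a b : V}
    (ha : a ∈ reachAvoiding G S u) (hb : b ∈ reachAvoiding G S v) : ¬ G.Adj a b := fun hab =>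
  Set.disjoint_left.mp h.disjoint_reachAvoiding
    (mem_reachAvoiding_of_adj ha hab (notMem_of_mem_reachAvoiding hb)) hb

lemma IsMinUVSeparator.exists_walk_meeting_only (h : IsMinUVSeparator G u v S) {w : V}
    (hw : w ∈ S) : ∃ p : G.Walk u v, ∀ z ∈ p.support, z ∈ S → z = w := by
  have hT : ¬ IsSeparator G u v (S \ {w}) := h.2 _ (Set.sdiff_singleton_ssubset.mpr hw)
  have hnotall : ¬ ∀ p : G.Walk u v, ∃ z ∈ p.support, z ∈ S \ {w} :=
    fun hall => hT ⟨fun hu => h.1.1 hu.1, fun hv => h.1.2.1 hv.1, hall⟩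
  simp only [not_forall, not_exists, not_and] at hnotall
  obtain ⟨p, hp⟩ := hnotall
  exact ⟨p, fun z hz hzS => by_contra fun hzw => hp z hz ⟨hzS, hzw⟩⟩

lemma IsMinUVSeparator.exists_adj_of_mem (h : IsMinUVSeparator G u v S) {w : V}
    (hw : w ∈ S) : ∃ a ∈ reachAvoiding G S u, G.Adj a w := by
  obtain ⟨p, hp⟩ := h.exists_walk_meeting_only hw
  have hu : u ∈ reachAvoiding G S u := ⟨nil, by simpa using h.1.1⟩
  have hv : v ∉ reachAvoiding G S u := fun hv =>
    Set.disjoint_left.mp h.1.disjoint_reachAvoiding hv ⟨nil, by simpa using h.1.2.1⟩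
  obtain ⟨d, hd, hd1, hd2⟩ := p.exists_boundary_dart _ hu hv
  have hdS : d.snd ∈ S := by
    by_contra hdS
    exact hd2 (mem_reachAvoiding_of_adj hd1 d.adj hdS)
  exact ⟨d.fst, hd1, hp _ (p.dart_snd_mem_support_of_mem_darts hd) hdS ▸ d.adj⟩

end reachAvoiding

theorem minimal_separator_is_clique_general (G : SimpleGraph V)
    (hG : IsChordal G) (S : Set V) (hS : IsMinimalSeparator G S) :
    G.IsClique S := by
  obtain ⟨u, v, -, -, hmin⟩ := hS
  intro x hx y hy hxy
  obtain ⟨a, ha, hax⟩ := hmin.exists_adj_of_mem hx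
  obtain ⟨a', ha', ha'y⟩ := hmin.exists_adj_of_mem hy
  obtain ⟨b, hb, hbx⟩ := hmin.symm.exists_adj_of_mem hx
  obtain ⟨b', hb', hb'y⟩ := hmin.symm.exists_adj_of_mem hy
  obtain ⟨p, hp⟩ := exists_walk_through_reachAvoiding hax.symm ha ha' ha'y
  obtain ⟨q, hq⟩ := exists_walk_through_reachAvoiding hbx.symm hb hb' hb'y
  exact hG.adj_of_walks_through_disjoint hmin.1.disjoint_reachAvoiding
    (fun _ ha _ hb => hmin.1.not_adj_of_mem_reachAvoiding ha hb) hxy p hp q hq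

/-- In a chordal graph, every minimal separator is a clique. -/
theorem minimal_separator_is_clique [Fintype V] (G : SimpleGraph V)
    (hG : IsChordal G) (S : Set V) (hS : IsMinimalSeparator G S) :
    G.IsClique S :=
  minimal_separator_is_clique_general G hG S hS
end

section
/- If T is a clique tree of a graph G and QQ' is an edge of T, then the label S = Q ∩ Q' is a minimal separator of G; more precisely, there exist vertices v ∈ Q \ Q' and v' ∈ Q' \ Q such that S is a {v,v'}-separator. -/
open SimpleGraph

variable {V : Type*}

/-!
Deleting the edge `QQ'` splits the tree into two components, one containing `Q` and one
containing `Q'`. A vertex outside `Q ∩ Q'` lies in cliques forming a subtree that avoids the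
edge `QQ'`, and consecutive vertices of a walk share a maximal clique; so a walk from
`v ∈ Q \ Q'` to `v' ∈ Q' \ Q` avoiding `Q ∩ Q'` would join `Q` to `Q'` in the tree minus that
edge. Minimality holds because every vertex of `Q ∩ Q'` is a common neighbour of `v` and `v'`.
-/

lemma exists_isMaxClique_superset (G : SimpleGraph V) {C : Set V} (hC : G.IsClique C) :
    ∃ R, IsMaxClique G R ∧ C ⊆ R := by
  obtain ⟨R, hCR, hmax⟩ := zorn_subset_nonempty {R : Set V | G.IsClique R}
    (fun c hc hchain _ => ⟨⋃₀ c, (Set.pairwise_sUnion hchain.directedOn).2 hc,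
      fun _ => Set.subset_sUnion_of_mem⟩) C hC
  exact ⟨R, ⟨hmax.prop, fun R' hR' hRR' => hRR'.antisymm (hmax.2 hR' hRR')⟩, hCR⟩

lemma MaxClique.diff_nonempty {G : SimpleGraph V} {Q Q' : MaxClique G} (h : Q ≠ Q') :
    (Q.1 \ Q'.1).Nonempty :=
  Set.sdiff_nonempty.2 fun hsub => h (Subtype.ext (Q.2.2 Q'.1 Q'.2.1 hsub))

namespace IsSeparator

variable {G : SimpleGraph V} {u v : V} {S : Set V}

lemma ne (h : IsSeparator G u v S) : u ≠ v := by
  rintro rfl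
  obtain ⟨x, hx, hxS⟩ := h.2.2 .nil
  rw [Walk.support_nil, List.mem_singleton] at hx
  exact h.1 (hx ▸ hxS)

lemma not_adj (h : IsSeparator G u v S) : ¬ G.Adj u v := by
  intro huv
  obtain ⟨x, hx, hxS⟩ := h.2.2 huv.toWalk
  simp only [Adj.toWalk, Walk.support_cons, Walk.support_nil, List.mem_cons,
    List.not_mem_nil, or_false] at hx
  rcases hx with rfl | rfl
  exacts [h.1 hxS, h.2.1 hxS]

lemma isMinUVSeparator_of_forall_adj (h : IsSeparator G u v S)
    (hS : ∀ s ∈ S, G.Adj u s ∧ G.Adj s v) : IsMinUVSeparator G u v S := by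
  refine ⟨h, fun T hTS hT => ?_⟩
  obtain ⟨s, hsS, hsT⟩ := Set.exists_of_ssubset hTS
  obtain ⟨x, hx, hxT⟩ := hT.2.2 (.cons (hS s hsS).1 (hS s hsS).2.toWalk)
  simp only [Adj.toWalk, Walk.support_cons, Walk.support_nil, List.mem_cons,
    List.not_mem_nil, or_false] at hx
  rcases hx with rfl | rfl | rfl
  exacts [hT.1 hxT, hsT hxT, hT.2.1 hxT]

end IsSeparator

lemma IsMinUVSeparator.isMinimalSeparator {G : SimpleGraph V} {u v : V} {S : Set V}
    (h : IsMinUVSeparator G u v S) : IsMinimalSeparator G S :=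
  ⟨u, v, h.1.ne, h.1.not_adj, h⟩

namespace CliqueTree

variable {G : SimpleGraph V} (T : CliqueTree G) {Q Q' : MaxClique G}

lemma reachable_deleteEdges_of_mem {x : V} (hx : x ∉ Q.1 ∩ Q'.1) {R R' : MaxClique G}
    (hR : x ∈ R.1) (hR' : x ∈ R'.1) : (T.tree.deleteEdges {s(Q, Q')}).Reachable R R' := by
  refine ((T.subtree x).preconnected ⟨R, hR⟩ ⟨R', hR'⟩).map
    ⟨Subtype.val, fun {a b} hab => deleteEdges_adj.2 ⟨hab, fun he => hx ?_⟩⟩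
  rcases Sym2.eq_iff.1 (Set.mem_singleton_iff.1 he) with ⟨ha, hb⟩ | ⟨ha, hb⟩
  · exact ⟨ha ▸ a.2, hb ▸ b.2⟩
  · exact ⟨hb ▸ b.2, ha ▸ a.2⟩

lemma reachable_deleteEdges_of_walk {a b : V} (p : G.Walk a b)
    (hp : ∀ x ∈ p.support, x ∉ Q.1 ∩ Q'.1) {R R' : MaxClique G} (hR : a ∈ R.1)
    (hR' : b ∈ R'.1) : (T.tree.deleteEdges {s(Q, Q')}).Reachable R R' := by
  induction p generalizing R with
  | nil => exact T.reachable_deleteEdges_of_mem (hp _ (by simp)) hR hR'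
  | cons hab p ih =>
    obtain ⟨C, hC, habC⟩ := exists_isMaxClique_superset G (isClique_pair.2 fun _ => hab)
    have hC' : (T.tree.deleteEdges {s(Q, Q')}).Reachable R ⟨C, hC⟩ :=
      T.reachable_deleteEdges_of_mem (hp _ (by simp)) hR (habC (by simp))
    exact hC'.trans (ih (fun x hx => hp x (by simp [hx])) (habC (by simp)) hR')

lemma isSeparator_inter (h : T.tree.Adj Q Q') {v v' : V} (hv : v ∈ Q.1 \ Q'.1)
    (hv' : v' ∈ Q'.1 \ Q.1) : IsSeparator G v v' (Q.1 ∩ Q'.1) := by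
  refine ⟨fun hvS => hv.2 hvS.2, fun hv'S => hv'.2 hv'S.1, fun p => ?_⟩
  by_contra! hp
  exact isBridge_iff.1 (isAcyclic_iff_forall_adj_isBridge.1 T.isTree.2 h)
    (T.reachable_deleteEdges_of_walk p hp hv.1 hv'.1)

end CliqueTree

theorem cliqueTree_edge_label_is_separator_general (G : SimpleGraph V)
    (T : CliqueTree G) (Q Q' : MaxClique G) (h : T.tree.Adj Q Q') :
    ∃ v ∈ Q.1 \ Q'.1, ∃ v' ∈ Q'.1 \ Q.1,
      IsMinUVSeparator G v v' (Q.1 ∩ Q'.1) ∧ IsMinimalSeparator G (Q.1 ∩ Q'.1) := by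
  obtain ⟨v, hv⟩ := MaxClique.diff_nonempty h.ne
  obtain ⟨v', hv'⟩ := MaxClique.diff_nonempty h.ne.symm
  have hmin : IsMinUVSeparator G v v' (Q.1 ∩ Q'.1) :=
    (T.isSeparator_inter h hv hv').isMinUVSeparator_of_forall_adj fun s hs =>
      ⟨Q.2.1 hv.1 hs.1 (ne_of_mem_of_not_mem hs.2 hv.2).symm,
        Q'.2.1 hs.2 hv'.1 (ne_of_mem_of_not_mem hs.1 hv'.2)⟩
  exact ⟨v, hv, v', hv', hmin, hmin.isMinimalSeparator⟩

/-- If `QQ'` is an edge of a clique tree of `G`, then its label `Q ∩ Q'` is a minimal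
separator; more precisely there are `v ∈ Q \ Q'` and `v' ∈ Q' \ Q` such that
`Q ∩ Q'` is a `{v,v'}`-separator. -/
theorem cliqueTree_edge_label_is_separator [Fintype V] (G : SimpleGraph V)
    (T : CliqueTree G) (Q Q' : MaxClique G) (h : T.tree.Adj Q Q') :
    ∃ v ∈ Q.1 \ Q'.1, ∃ v' ∈ Q'.1 \ Q.1,
      IsMinUVSeparator G v v' (Q.1 ∩ Q'.1) ∧ IsMinimalSeparator G (Q.1 ∩ Q'.1) :=
  cliqueTree_edge_label_is_separator_general G T Q Q' h
end

section
/- Let G be a chordal graph, let T be a clique tree of G, and let z1, z2, z3 be three pairwise non-adjacent vertices forming an asteroidal triple. Then the minimal subtree of T connecting the subtrees T^{z1}, T^{z2}, T^{z3} has exactly three leaves; in particular, it is not a path. -/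
open SimpleGraph

variable {V : Type*}

/-- `Q` is a leaf of the subtree induced on `W`: it lies in `W` and has exactly one
neighbor in `W`. -/
def IsLeafIn (T : SimpleGraph α) (W : Set α) (Q : α) : Prop :=
  Q ∈ W ∧ ∃! R, R ∈ W ∧ T.Adj Q R

/-- `W` is a connected set of cliques of the clique tree `T` meeting each of the
subtrees `T^{z1}, T^{z2}, T^{z3}`. -/
def IsConnector3 (G : SimpleGraph V) (T : CliqueTree G) (z1 z2 z3 : V)
    (W : Set (MaxClique G)) : Prop :=
  (T.tree.induce W).Connected ∧
    (∃ Q ∈ W, z1 ∈ Q.1) ∧ (∃ Q ∈ W, z2 ∈ Q.1) ∧ (∃ Q ∈ W, z3 ∈ Q.1)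

/-- `W` is a connected set of cliques of the clique tree `T` meeting each of the
subtrees `T^{z1}, T^{z2}, T^{z3}, T^{z4}`. -/
def IsConnector4 (G : SimpleGraph V) (T : CliqueTree G) (z1 z2 z3 z4 : V)
    (W : Set (MaxClique G)) : Prop :=
  (T.tree.induce W).Connected ∧
    (∃ Q ∈ W, z1 ∈ Q.1) ∧ (∃ Q ∈ W, z2 ∈ Q.1) ∧ (∃ Q ∈ W, z3 ∈ Q.1) ∧ (∃ Q ∈ W, z4 ∈ Q.1)

/-- An interval graph: the intersection graph of a family of (nonempty) closed
intervals of the real line. -/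
def IsIntervalGraph (G : SimpleGraph V) : Prop :=
  ∃ a b : V → ℝ, (∀ v, a v ≤ b v) ∧
    ∀ u v : V, G.Adj u v ↔ u ≠ v ∧ (Set.Icc (a u) (b u) ∩ Set.Icc (a v) (b v)).Nonempty

/-- The underlying tree of `T` is a path: every vertex has at most two neighbors. -/
def CliqueTree.IsCliquePath (G : SimpleGraph V) (T : CliqueTree G) : Prop :=
  ∀ Q a b c : MaxClique G, T.tree.Adj Q a → T.tree.Adj Q b → T.tree.Adj Q c →
    a = b ∨ a = c ∨ b = c

/-!
A maximal clique containing `z` lies in the closed neighbourhood of `z`, and the maximal cliques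
meeting a walk of `G` form a subtree of `T`. So a walk from `z_j` to `z_k` avoiding `N[z_i]`
gives a path of `T` from `T^{z_j}` to `T^{z_k}` avoiding `T^{z_i}`. Hence, for cliques
`Q_i ∋ z_i` in `W`, the median of `Q_1, Q_2, Q_3` in the tree is none of them, so it is a vertex
of `W` with three neighbours in `W`, and the three branches at it end in three leaves of `W`.
Conversely, deleting a leaf keeps `W` connected, so by minimality every leaf is the only clique
of `W` containing some `z_i`; distinct leaves get distinct `z_i`, so there is no fourth leaf.
-/
namespace SimpleGraph

variable {α : Type*} {T : SimpleGraph α}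

lemma Walk.exists_append_first_mem {S : Set α} :
    ∀ {x y : α} (q : T.Walk x y), y ∈ S → ∃ m ∈ S, ∃ (q₁ : T.Walk x m) (q₂ : T.Walk m y),
      q = q₁.append q₂ ∧ ∀ a ∈ q₁.support, a ∈ S → a = m
  | x, _, .nil, hy => ⟨x, hy, .nil, .nil, rfl, by simp⟩
  | x, _, .cons h q, hy => by
    by_cases hx : x ∈ S
    · exact ⟨x, hx, .nil, .cons h q, rfl, by simp⟩
    · obtain ⟨m, hm, q₁, q₂, rfl, hfirst⟩ := q.exists_append_first_mem hy
      refine ⟨m, hm, .cons h q₁, q₂, rfl, ?_⟩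
      intro a ha haS
      rw [Walk.support_cons, List.mem_cons] at ha
      rcases ha with rfl | ha
      · exact absurd haS hx
      · exact hfirst a ha haS

lemma Connected.induce_diff_singleton_of_isLeafIn {S : Set α} {L : α}
    (hS : (T.induce S).Connected) (hL : IsLeafIn T S L) : (T.induce (S \ {L})).Connected := by
  obtain ⟨hLS, R, ⟨hRS, hLR⟩, huniq⟩ := hL
  have hnbhd : (T.induce S).neighborSet ⟨L, hLS⟩ = {⟨R, hRS⟩} := by
    ext w
    simp only [mem_neighborSet, comap_adj, Function.Embedding.subtype_apply,
      Set.mem_singleton_iff]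
    exact ⟨fun h => Subtype.ext (huniq w ⟨w.2, h⟩), by rintro rfl; exact hLR⟩
  have : Fintype ((T.induce S).neighborSet ⟨L, hLS⟩) := by rw [hnbhd]; infer_instance
  have hdeg : (T.induce S).degree ⟨L, hLS⟩ = 1 := by
    rw [degree_eq_one_iff_existsUnique_adj]
    exact ⟨⟨R, hRS⟩, hLR, fun w hw => Subtype.ext (huniq w ⟨w.2, hw⟩)⟩
  refine (hS.induce_compl_singleton_of_degree_eq_one hdeg).map
    ⟨fun w => ⟨w.1.1, w.1.2, fun h => w.2 (Subtype.ext h)⟩, fun h => h⟩ ?_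
  rintro ⟨w, hwS, hwL⟩
  exact ⟨⟨⟨w, hwS⟩, fun h => hwL (congrArg Subtype.val h)⟩, rfl⟩

namespace IsTree

variable (hT : T.IsTree)

noncomputable def path (x y : α) : T.Walk x y := (hT.existsUnique_path x y).exists.choose

lemma isPath_path (x y : α) : (hT.path x y).IsPath := (hT.existsUnique_path x y).exists.choose_spec

lemma eq_path {x y : α} {p : T.Walk x y} (hp : p.IsPath) : p = hT.path x y :=
  (hT.existsUnique_path x y).unique hp (hT.isPath_path x y)

lemma support_path_subset {x y : α} (w : T.Walk x y) : (hT.path x y).support ⊆ w.support := by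
  classical
  rw [← hT.eq_path w.bypass_isPath]
  exact w.support_bypass_subset_support

lemma mem_of_mem_support_path {S : Set α} (hS : (T.induce S).Connected) {x y a : α}
    (hx : x ∈ S) (hy : y ∈ S) (ha : a ∈ (hT.path x y).support) : a ∈ S := by
  obtain ⟨w⟩ := hS.preconnected ⟨x, hx⟩ ⟨y, hy⟩
  obtain ⟨b, -, rfl⟩ := List.mem_map.1 <|
    (Walk.support_map _ w) ▸ hT.support_path_subset (w.map (Embedding.induce S).toHom) ha
  exact b.2

lemma exists_median (x y z : α) :
    ∃ m, m ∈ (hT.path x y).support ∧ m ∈ (hT.path y z).support ∧ m ∈ (hT.path x z).support ∧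
      (m = x ∨ m = y ∨ m = z ∨ ∃ a b c, T.Adj m a ∧ T.Adj m b ∧ T.Adj m c ∧
        a ≠ b ∧ a ≠ c ∧ b ≠ c ∧ a ∈ (hT.path x y).support ∧ b ∈ (hT.path y z).support ∧
        c ∈ (hT.path y z).support) := by
  classical
  set P := hT.path y z
  have hP : P.IsPath := hT.isPath_path y z
  -- `m` is the first vertex of the `x`–`y` path lying on the `y`–`z` path
  obtain ⟨m, hmP, q₁, q₂, hq, hfirst⟩ :=
    (hT.path x y).exists_append_first_mem (S := {a | a ∈ P.support}) P.start_mem_support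
  have hq₁ : q₁.IsPath := (hq ▸ hT.isPath_path x y).of_append_left
  have hmem_q : ∀ a ∈ q₁.support, a ∈ (hT.path x y).support := fun a ha => by
    rw [hq, Walk.mem_support_append_iff]; exact Or.inl ha
  set r₁ := P.takeUntil m hmP
  set r₂ := P.dropUntil m hmP
  have hr : r₁.append r₂ = P := P.take_spec hmP
  have hr₂ : r₂.IsPath := hP.dropUntil hmP
  -- `q₁` meets `P` only in `m`, so `q₁ ++ r₂` is the path from `x` to `z`
  have hxz : (q₁.append r₂).IsPath := by
    refine Walk.IsPath.mk' ?_
    rw [Walk.support_append]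
    refine hq₁.support_nodup.append hr₂.support_nodup.tail fun a ha ha' => ?_
    have ham : a = m :=
      hfirst a ha (P.support_dropUntil_subset_support hmP (List.mem_of_mem_tail ha'))
    subst ham
    have := hr₂.support_nodup
    rw [← r₂.cons_tail_support] at this
    exact (List.nodup_cons.1 this).1 ha'
  refine ⟨m, hmem_q m q₁.end_mem_support, hmP, ?_, ?_⟩
  · rw [← hT.eq_path hxz, Walk.mem_support_append_iff]; exact Or.inl q₁.end_mem_support
  by_cases hmx : m = x; · exact Or.inl hmx
  by_cases hmy : m = y; · exact Or.inr (Or.inl hmy)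
  by_cases hmz : m = z; · exact Or.inr (Or.inr (Or.inl hmz))
  refine Or.inr (Or.inr (Or.inr ?_))
  have hq₁nil : ¬ q₁.Nil := Walk.not_nil_of_ne (Ne.symm hmx)
  have hr₁nil : ¬ r₁.Nil := Walk.not_nil_of_ne (Ne.symm hmy)
  have hr₂nil : ¬ r₂.Nil := Walk.not_nil_of_ne hmz
  have ha : q₁.penultimate ∈ q₁.support := Walk.getVert_mem_support _ _
  have hb : r₁.penultimate ∈ P.support :=
    P.support_takeUntil_subset_support hmP (Walk.getVert_mem_support _ _)
  have hc : r₂.snd ∈ P.support :=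
    P.support_dropUntil_subset_support hmP (Walk.getVert_mem_support _ _)
  have haP : q₁.penultimate ∉ P.support := fun h =>
    (Walk.adj_penultimate hq₁nil).ne (hfirst _ ha h)
  refine ⟨q₁.penultimate, r₁.penultimate, r₂.snd, (Walk.adj_penultimate hq₁nil).symm,
    (Walk.adj_penultimate hr₁nil).symm, Walk.adj_snd hr₂nil, fun h => haP (h ▸ hb),
    fun h => haP (h ▸ hc), ?_, hmem_q _ ha, hb, hc⟩
  exact (hr ▸ hP).ne_of_mem_support_of_append (Walk.adj_snd hr₂nil).ne.symm
    (Walk.getVert_mem_support _ _) (Walk.getVert_mem_support _ _)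

lemma exists_isLeafIn_snd_eq [Finite α] {W : Set α} (hW : (T.induce W).Connected) {m a : α}
    (hm : m ∈ W) (ha : a ∈ W) (hma : T.Adj m a) :
    ∃ L, IsLeafIn T W L ∧ (hT.path m L).snd = a := by
  obtain ⟨L, ⟨hLW, haL⟩, hmax⟩ := Set.Finite.exists_maximalFor (fun R => (hT.path m R).length)
    {R | R ∈ W ∧ a ∈ (hT.path m R).support} (Set.toFinite _)
    ⟨a, ha, (hT.path m a).end_mem_support⟩
  have hpath := hT.isPath_path m L
  have hnil : ¬ (hT.path m L).Nil := by
    refine Walk.not_nil_of_ne fun hmL => ?_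
    subst hmL
    rw [← hT.eq_path Walk.IsPath.nil, Walk.support_nil, List.mem_singleton] at haL
    exact hma.ne haL.symm
  refine ⟨L, ⟨hLW, (hT.path m L).penultimate, ⟨?_, (Walk.adj_penultimate hnil).symm⟩, ?_⟩,
    (hT.isAcyclic.eq_snd_of_adj_start hpath hma haL).symm⟩
  · exact hT.mem_of_mem_support_path hW hm hLW (Walk.getVert_mem_support _ _)
  rintro R ⟨hRW, hLR⟩
  by_contra hR
  have hRL : R ∉ (hT.path m L).support := fun h =>
    hR (hT.isAcyclic.eq_penultimate_of_adj_end hpath hLR h)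
  have hmR := hT.eq_path (hpath.concat hRL hLR)
  have hlen := hmax (j := R) ⟨hRW, hmR ▸ Walk.support_subset_support_concat _ _ haL⟩
    (by simp only [← hmR, Walk.length_concat]; omega)
  simp only [← hmR, Walk.length_concat] at hlen
  omega

end IsTree

end SimpleGraph

open SimpleGraph

section

variable {G : SimpleGraph V}

lemma SimpleGraph.IsClique.exists_maxClique_superset [Finite V] {s : Set V} (hs : G.IsClique s) :
    ∃ Q : MaxClique G, s ⊆ Q.1 := by
  obtain ⟨Q, hsQ, hQ⟩ := (Set.toFinite {t : Set V | G.IsClique t}).exists_le_maximal hs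
  exact ⟨⟨Q, hQ.1, fun R hR hQR => hQR.antisymm (hQ.2 hR hQR)⟩, hsQ⟩

namespace CliqueTree

variable (T : CliqueTree G)

lemma connected_induce_cliques_meeting_walk [Finite V] {u w : V} (p : G.Walk u w) :
    (T.tree.induce {Q | ∃ x ∈ p.support, x ∈ Q.1}).Connected := by
  induction p with
  | @nil u =>
    rw [show {Q : MaxClique G | ∃ x ∈ (Walk.nil : G.Walk u u).support, x ∈ Q.1} =
      {Q | u ∈ Q.1} by ext; simp]
    exact T.subtree u
  | @cons u x w h p ih =>
    obtain ⟨Q, hQ⟩ := (isClique_pair.2 fun _ => h).exists_maxClique_superset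
    have hsplit : {Q : MaxClique G | ∃ y ∈ (Walk.cons h p).support, y ∈ Q.1} =
        {Q | u ∈ Q.1} ∪ {Q | ∃ y ∈ p.support, y ∈ Q.1} := by
      ext; simp
    rw [hsplit]
    exact induce_union_connected (T.subtree u).preconnected ih.preconnected
      ⟨Q, hQ (by simp), x, p.start_mem_support, hQ (by simp)⟩

lemma notMem_support_path_of_walk [Finite V] {u w : V} (p : G.Walk u w) {Q : MaxClique G}
    (hQ : ∀ x ∈ p.support, x ∉ Q.1) {C D : MaxClique G} (hC : u ∈ C.1) (hD : w ∈ D.1) :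
    Q ∉ (T.isTree.path C D).support := fun h => by
  obtain ⟨x, hx, hxQ⟩ := T.isTree.mem_of_mem_support_path
    (T.connected_induce_cliques_meeting_walk p) ⟨u, p.start_mem_support, hC⟩
    ⟨w, p.end_mem_support, hD⟩ h
  exact hQ x hx hxQ

end CliqueTree

lemma IsAsteroidalTriple.exists_branch_vertex [Finite V] {T : CliqueTree G} {z1 z2 z3 : V}
    {W : Set (MaxClique G)} (hAT : IsAsteroidalTriple G z1 z2 z3)
    (hW : IsConnector3 G T z1 z2 z3 W) :
    ∃ m ∈ W, ∃ a ∈ W, ∃ b ∈ W, ∃ c ∈ W,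
      T.tree.Adj m a ∧ T.tree.Adj m b ∧ T.tree.Adj m c ∧ a ≠ b ∧ a ≠ c ∧ b ≠ c := by
  obtain ⟨-, -, -, -, -, -, ⟨p12, hp12⟩, ⟨p23, hp23⟩, ⟨p13, hp13⟩⟩ := hAT
  obtain ⟨hWc, ⟨Q1, hQ1, hz1⟩, ⟨Q2, hQ2, hz2⟩, ⟨Q3, hQ3, hz3⟩⟩ := hW
  have avoids : ∀ {z u w : V} {Q : MaxClique G} (p : G.Walk u w), z ∈ Q.1 →
      (∀ x ∈ p.support, x ≠ z ∧ ¬ G.Adj z x) → ∀ x ∈ p.support, x ∉ Q.1 :=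
    fun {_ _ _ Q} _ hz hp x hx hxQ => (hp x hx).2 (Q.2.1 hz hxQ (hp x hx).1.symm)
  obtain ⟨m, hm12, hm23, hm13, hm⟩ := T.isTree.exists_median Q1 Q2 Q3
  rcases hm with rfl | rfl | rfl | ⟨a, b, c, hma, hmb, hmc, hab, hac, hbc, ha, hb, hc⟩
  · exact absurd hm23 (T.notMem_support_path_of_walk p23 (avoids p23 hz1 hp23) hz2 hz3)
  · exact absurd hm13 (T.notMem_support_path_of_walk p13 (avoids p13 hz2 hp13) hz1 hz3)
  · exact absurd hm12 (T.notMem_support_path_of_walk p12 (avoids p12 hz3 hp12) hz1 hz2)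
  have hmem : ∀ {x y a}, x ∈ W → y ∈ W → a ∈ (T.isTree.path x y).support → a ∈ W :=
    T.isTree.mem_of_mem_support_path hWc
  exact ⟨m, hmem hQ1 hQ2 hm12, a, hmem hQ1 hQ2 ha, b, hmem hQ2 hQ3 hb, c, hmem hQ2 hQ3 hc,
    hma, hmb, hmc, hab, hac, hbc⟩

namespace IsConnector3

variable {T : CliqueTree G} {z1 z2 z3 : V} {W : Set (MaxClique G)}

lemma exists_private_of_isLeafIn (hW : IsConnector3 G T z1 z2 z3 W)
    (hmin : ∀ W', W' ⊂ W → ¬ IsConnector3 G T z1 z2 z3 W') {L : MaxClique G}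
    (hL : IsLeafIn T.tree W L) : ∃ z, (z = z1 ∨ z = z2 ∨ z = z3) ∧ ∀ Q ∈ W, z ∈ Q.1 ↔ Q = L := by
  obtain ⟨hWc, h1, h2, h3⟩ := hW
  have hnot : ¬ ((∃ Q ∈ W \ {L}, z1 ∈ Q.1) ∧ (∃ Q ∈ W \ {L}, z2 ∈ Q.1) ∧
      (∃ Q ∈ W \ {L}, z3 ∈ Q.1)) := fun h =>
    hmin _ (Set.sdiff_singleton_ssubset.2 hL.1) ⟨hWc.induce_diff_singleton_of_isLeafIn hL, h⟩
  have hprivate : ∀ z, (∃ Q ∈ W, z ∈ Q.1) → ¬ (∃ Q ∈ W \ {L}, z ∈ Q.1) →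
      ∀ Q ∈ W, z ∈ Q.1 ↔ Q = L := by
    rintro z ⟨Q0, hQ0, hzQ0⟩ hz Q hQ
    refine ⟨fun hzQ => by_contra fun hne => hz ⟨Q, ⟨hQ, hne⟩, hzQ⟩, ?_⟩
    rintro rfl
    by_contra hzQ
    exact hz ⟨Q0, ⟨hQ0, fun h => hzQ (h ▸ hzQ0)⟩, hzQ0⟩
  simp only [not_and_or] at hnot
  rcases hnot with h | h | h
  exacts [⟨z1, Or.inl rfl, hprivate z1 h1 h⟩, ⟨z2, Or.inr (Or.inl rfl), hprivate z2 h2 h⟩,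
    ⟨z3, Or.inr (Or.inr rfl), hprivate z3 h3 h⟩]

lemma eq_of_isLeafIn (hW : IsConnector3 G T z1 z2 z3 W)
    (hmin : ∀ W', W' ⊂ W → ¬ IsConnector3 G T z1 z2 z3 W') {L₁ L₂ L₃ Q : MaxClique G}
    (h12 : L₁ ≠ L₂) (h13 : L₁ ≠ L₃) (h23 : L₂ ≠ L₃) (hL₁ : IsLeafIn T.tree W L₁)
    (hL₂ : IsLeafIn T.tree W L₂) (hL₃ : IsLeafIn T.tree W L₃) (hQ : IsLeafIn T.tree W Q) :
    Q = L₁ ∨ Q = L₂ ∨ Q = L₃ := by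
  obtain ⟨y₁, hy₁, hp₁⟩ := hW.exists_private_of_isLeafIn hmin hL₁
  obtain ⟨y₂, hy₂, hp₂⟩ := hW.exists_private_of_isLeafIn hmin hL₂
  obtain ⟨y₃, hy₃, hp₃⟩ := hW.exists_private_of_isLeafIn hmin hL₃
  obtain ⟨y, hy, hp⟩ := hW.exists_private_of_isLeafIn hmin hQ
  by_contra! hne
  have hinj : ∀ {A B : MaxClique G} {a b : V}, B ∈ W → (∀ Q ∈ W, a ∈ Q.1 ↔ Q = A) →
      (∀ Q ∈ W, b ∈ Q.1 ↔ Q = B) → A ≠ B → a ≠ b := by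
    rintro A B a b hB hA' hB' hAB rfl
    exact hAB ((hA' B hB).1 ((hB' B hB).2 rfl)).symm
  have := hinj hL₂.1 hp₁ hp₂ h12
  have := hinj hL₃.1 hp₁ hp₃ h13
  have := hinj hL₃.1 hp₂ hp₃ h23
  have := hinj hL₁.1 hp hp₁ hne.1
  have := hinj hL₂.1 hp hp₂ hne.2.1
  have := hinj hL₃.1 hp hp₃ hne.2.2
  -- four leaves would need four distinct private vertices among `z1, z2, z3`
  grind

end IsConnector3

end

theorem asteroidal_triple_three_leaves_general [Fintype V] (G : SimpleGraph V)
    (T : CliqueTree G) (z1 z2 z3 : V)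
    (hAT : IsAsteroidalTriple G z1 z2 z3) (W : Set (MaxClique G))
    (hW : IsConnector3 G T z1 z2 z3 W)
    (hmin : ∀ W', W' ⊂ W → ¬ IsConnector3 G T z1 z2 z3 W') :
    (∃ L1 L2 L3 : MaxClique G, L1 ≠ L2 ∧ L1 ≠ L3 ∧ L2 ≠ L3 ∧
      IsLeafIn T.tree W L1 ∧ IsLeafIn T.tree W L2 ∧ IsLeafIn T.tree W L3 ∧
      ∀ Q, IsLeafIn T.tree W Q → Q = L1 ∨ Q = L2 ∨ Q = L3) ∧
    ¬ (∀ Q ∈ W, ∀ a ∈ W, ∀ b ∈ W, ∀ c ∈ W,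
        T.tree.Adj Q a → T.tree.Adj Q b → T.tree.Adj Q c → a = b ∨ a = c ∨ b = c) := by
  obtain ⟨m, hm, a, ha, b, hb, c, hc, hma, hmb, hmc, hab, hac, hbc⟩ := hAT.exists_branch_vertex hW
  obtain ⟨La, hLa, rfl⟩ := T.isTree.exists_isLeafIn_snd_eq hW.1 hm ha hma
  obtain ⟨Lb, hLb, rfl⟩ := T.isTree.exists_isLeafIn_snd_eq hW.1 hm hb hmb
  obtain ⟨Lc, hLc, rfl⟩ := T.isTree.exists_isLeafIn_snd_eq hW.1 hm hc hmc
  have hLab : La ≠ Lb := by rintro rfl; exact hab rfl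
  have hLac : La ≠ Lc := by rintro rfl; exact hac rfl
  have hLbc : Lb ≠ Lc := by rintro rfl; exact hbc rfl
  refine ⟨⟨La, Lb, Lc, hLab, hLac, hLbc, hLa, hLb, hLc,
    fun Q hQ => hW.eq_of_isLeafIn hmin hLab hLac hLbc hLa hLb hLc hQ⟩, fun hpath => ?_⟩
  rcases hpath m hm _ ha _ hb _ hc hma hmb hmc with h | h | h
  exacts [hab h, hac h, hbc h]

/-- If `z1, z2, z3` is an asteroidal triple of a chordal graph `G`, then for every
clique tree `T` of `G` the minimal subtree `T(z1,z2,z3)` connecting `T^{z1}`,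
`T^{z2}`, `T^{z3}` has exactly three leaves; in particular it is not a path. -/
theorem asteroidal_triple_three_leaves [Fintype V] (G : SimpleGraph V)
    (hG : IsChordal G) (T : CliqueTree G) (z1 z2 z3 : V)
    (hAT : IsAsteroidalTriple G z1 z2 z3) (W : Set (MaxClique G))
    (hW : IsConnector3 G T z1 z2 z3 W)
    (hmin : ∀ W', W' ⊂ W → ¬ IsConnector3 G T z1 z2 z3 W') :
    (∃ L1 L2 L3 : MaxClique G, L1 ≠ L2 ∧ L1 ≠ L3 ∧ L2 ≠ L3 ∧
      IsLeafIn T.tree W L1 ∧ IsLeafIn T.tree W L2 ∧ IsLeafIn T.tree W L3 ∧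
      ∀ Q, IsLeafIn T.tree W Q → Q = L1 ∨ Q = L2 ∨ Q = L3) ∧
    ¬ (∀ Q ∈ W, ∀ a ∈ W, ∀ b ∈ W, ∀ c ∈ W,
        T.tree.Adj Q a → T.tree.Adj Q b → T.tree.Adj Q c → a = b ∨ a = c ∨ b = c) :=
  asteroidal_triple_three_leaves_general G T z1 z2 z3 hAT W hW hmin
end

section
/- Let G be a chordal graph with a clique tree T, let z1, z2, z3 be pairwise non-adjacent vertices, and let Q1, Q2, Q3 be maximal cliques with zi ∈ Qi appearing in this order along a path in T. Then every path in G from z1 to z3 contains a vertex of Q2; in particular it contains a neighbor of z2. -/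
open SimpleGraph

variable {V : Type*}

/-! A walk from `z1` to `z3` avoiding `Q2` is covered, edge by edge, by maximal cliques. None of
its vertices lies in `Q2`, so the subtrees of the clique tree belonging to them miss `Q2`, and they
chain together into a tree walk from `Q1` to `Q3` that misses `Q2`. -/

namespace SimpleGraph

theorem IsClique.exists_isMaxClique_superset {G : SimpleGraph V} {s : Set V}
    (hs : G.IsClique s) : ∃ Q, IsMaxClique G Q ∧ s ⊆ Q := by
  obtain ⟨Q, hsQ, hQ⟩ := zorn_subset_nonempty {R : Set V | G.IsClique R}
    (fun c hc hchain _ => ⟨⋃₀ c, (isClique_sUnion hchain.directedOn).2 hc,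
      fun _ => Set.subset_sUnion_of_mem⟩) s hs
  exact ⟨Q, ⟨hQ.prop, fun R hR hQR => hQR.antisymm (hQ.le_of_ge hR hQR)⟩, hsQ⟩

end SimpleGraph

namespace CliqueTree

variable {G : SimpleGraph V} (T : CliqueTree G)

theorem exists_walk_support_subset {v : V} {Qa Qb : MaxClique G} (ha : v ∈ Qa.1)
    (hb : v ∈ Qb.1) : ∃ w : T.tree.Walk Qa Qb, ∀ Q ∈ w.support, v ∈ Q.1 := by
  obtain ⟨w⟩ := T.subtree v ⟨Qa, ha⟩ ⟨Qb, hb⟩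
  refine ⟨w.map (Embedding.induce _).toHom, fun Q hQ => ?_⟩
  obtain ⟨q, -, rfl⟩ := List.mem_map.1 (w.support_map _ ▸ hQ)
  exact q.2

theorem exists_walk_not_mem_support_of_walk {Q : MaxClique G} {a b : V} (p : G.Walk a b)
    (hp : ∀ x ∈ p.support, x ∉ Q.1) {Qa Qb : MaxClique G} (ha : a ∈ Qa.1) (hb : b ∈ Qb.1) :
    ∃ w : T.tree.Walk Qa Qb, Q ∉ w.support := by
  induction p generalizing Qa with
  | nil =>
    obtain ⟨w, hw⟩ := T.exists_walk_support_subset ha hb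
    exact ⟨w, fun hQ => hp _ (Walk.start_mem_support _) (hw Q hQ)⟩
  | @cons a c b hac p ih =>
    obtain ⟨R, hR, hacR⟩ := (isClique_pair.2 fun _ => hac).exists_isMaxClique_superset
    obtain ⟨w₁, hw₁⟩ := T.exists_walk_support_subset (Qb := ⟨R, hR⟩) ha (hacR (by simp))
    obtain ⟨w₂, hw₂⟩ := ih (fun x hx => hp x (List.mem_cons_of_mem _ hx))
      (Qa := ⟨R, hR⟩) (hacR (by simp)) hb
    refine ⟨w₁.append w₂, fun hQ => ?_⟩
    rcases (Walk.mem_support_append_iff _ _).1 hQ with hQ₁ | hQ₂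
    · exact hp a (Walk.start_mem_support _) (hw₁ Q hQ₁)
    · exact hw₂ hQ₂

end CliqueTree

theorem middle_clique_separates_general (G : SimpleGraph V)
    (T : CliqueTree G) (z1 z2 z3 : V)
    (Q1 Q2 Q3 : MaxClique G) (hz1 : z1 ∈ Q1.1) (hz2 : z2 ∈ Q2.1) (hz3 : z3 ∈ Q3.1)
    (horder : ∀ p : T.tree.Walk Q1 Q3, Q2 ∈ p.support) :
    ∀ p : G.Walk z1 z3,
      (∃ x ∈ p.support, x ∈ Q2.1) ∧ (∃ x ∈ p.support, x = z2 ∨ G.Adj z2 x) := by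
  intro p
  have hmeet : ∃ x ∈ p.support, x ∈ Q2.1 := by
    by_contra! hp
    obtain ⟨w, hw⟩ := T.exists_walk_not_mem_support_of_walk p hp hz1 hz3
    exact hw (horder w)
  obtain ⟨x, hx, hxQ2⟩ := hmeet
  refine ⟨⟨x, hx, hxQ2⟩, x, hx, ?_⟩
  by_cases hxz2 : x = z2
  · exact Or.inl hxz2
  · exact Or.inr (Q2.2.1 hz2 hxQ2 (Ne.symm hxz2))

/-- If `Q1, Q2, Q3` are maximal cliques containing the pairwise non-adjacent vertices
`z1, z2, z3` and `Q2` lies on the tree path between `Q1` and `Q3` in a clique tree,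
then every walk from `z1` to `z3` in `G` meets `Q2`, and in particular meets the
closed neighborhood of `z2`. -/
theorem middle_clique_separates [Fintype V] (G : SimpleGraph V) (hG : IsChordal G)
    (T : CliqueTree G) (z1 z2 z3 : V)
    (h12 : z1 ≠ z2) (h23 : z2 ≠ z3) (h13 : z1 ≠ z3)
    (ha12 : ¬ G.Adj z1 z2) (ha23 : ¬ G.Adj z2 z3) (ha13 : ¬ G.Adj z1 z3)
    (Q1 Q2 Q3 : MaxClique G) (hz1 : z1 ∈ Q1.1) (hz2 : z2 ∈ Q2.1) (hz3 : z3 ∈ Q3.1)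
    (horder : ∀ p : T.tree.Walk Q1 Q3, Q2 ∈ p.support) :
    ∀ p : G.Walk z1 z3,
      (∃ x ∈ p.support, x ∈ Q2.1) ∧ (∃ x ∈ p.support, x = z2 ∨ G.Adj z2 x) :=
  middle_clique_separates_general G T z1 z2 z3 Q1 Q2 Q3 hz1 hz2 hz3 horder
end

section
/- If a chordal graph G is an interval graph, then G contains no asteroidal triple. -/
open SimpleGraph

variable {V : Type*}

/-!
Non-adjacent vertices of an interval graph have disjoint intervals, so of three pairwise
non-adjacent vertices one has its interval strictly between the other two. A walk moves
through overlapping intervals, so a walk between the outer two that never enters the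
closed neighbourhood of the middle vertex stays on one side of its interval and cannot
get across.
-/

namespace SimpleGraph

variable {G : SimpleGraph V} {lo hi : V → ℝ}

def IntervalBetween (lo hi : V → ℝ) (x m y : V) : Prop :=
  (hi x < lo m ∧ hi m < lo y) ∨ (hi y < lo m ∧ hi m < lo x)

theorem IntervalBetween.symm {x m y : V} (h : IntervalBetween lo hi x m y) :
    IntervalBetween lo hi y m x :=
  Or.symm h

theorem intervalBetween_of_pairwise_disjoint {a b c : V}
    (hab : hi a < lo b ∨ hi b < lo a) (hbc : hi b < lo c ∨ hi c < lo b)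
    (hac : hi a < lo c ∨ hi c < lo a) :
    IntervalBetween lo hi a b c ∨ IntervalBetween lo hi b c a ∨ IntervalBetween lo hi b a c := by
  unfold IntervalBetween
  tauto

variable (hle : ∀ v, lo v ≤ hi v)
  (hadj : ∀ u v, G.Adj u v ↔ u ≠ v ∧ (Set.Icc (lo u) (hi u) ∩ Set.Icc (lo v) (hi v)).Nonempty)
include hle hadj

theorem hi_lt_lo_or_hi_lt_lo_of_not_adj {u v : V} (huv : u ≠ v) (h : ¬G.Adj u v) :
    hi u < lo v ∨ hi v < lo u := by
  by_contra! hoverlap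
  refine h ((hadj u v).2 ⟨huv, max (lo u) (lo v), ⟨le_max_left _ _, ?_⟩, le_max_right _ _, ?_⟩)
  · exact max_le (hle u) hoverlap.1
  · exact max_le hoverlap.2 (hle v)

theorem Walk.hi_lt_lo_of_avoids {m x y : V} (p : G.Walk x y)
    (hp : ∀ z ∈ p.support, z ≠ m ∧ ¬G.Adj m z) (hx : hi x < lo m) : hi y < lo m := by
  induction p with
  | nil => exact hx
  | @cons x w y hxw p ih =>
    obtain ⟨_, ⟨-, htx⟩, hwt, -⟩ := ((hadj x w).1 hxw).2
    obtain ⟨hwm, hmw⟩ := hp w (by simp)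
    refine ih (fun z hz => hp z (by simp [hz])) ?_
    rcases hi_lt_lo_or_hi_lt_lo_of_not_adj hle hadj (Ne.symm hwm) hmw with hmw | hwm
    · linarith [hle m]
    · exact hwm

theorem Walk.not_avoids_of_intervalBetween {m x y : V} (hxy : IntervalBetween lo hi x m y)
    (p : G.Walk x y) : ¬∀ z ∈ p.support, z ≠ m ∧ ¬G.Adj m z := by
  wlog hleft : hi x < lo m ∧ hi m < lo y generalizing x y
  · intro hp
    refine this hxy.symm p.reverse ?_ (fun z hz => hp z (by simpa using hz))
    exact hxy.resolve_left hleft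
  intro hp
  have hy := p.hi_lt_lo_of_avoids hle hadj hp hleft.1
  linarith [hle m, hle y, hleft.2]

end SimpleGraph

theorem interval_no_asteroidal_triple_general (G : SimpleGraph V)
    (hI : IsIntervalGraph G) :
    ∀ a b c : V, ¬ IsAsteroidalTriple G a b c := by
  obtain ⟨lo, hi, hle, hadj⟩ := hI
  rintro a b c ⟨hab, hbc, hac, nab, nbc, nac, ⟨pab, hpab⟩, ⟨pbc, hpbc⟩, ⟨pac, hpac⟩⟩
  have hdisj {u v : V} := hi_lt_lo_or_hi_lt_lo_of_not_adj (u := u) (v := v) hle hadj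
  rcases intervalBetween_of_pairwise_disjoint (hdisj hab nab) (hdisj hbc nbc)
      (hdisj hac nac) with hb | hc | ha
  · exact pac.not_avoids_of_intervalBetween hle hadj hb hpac
  · exact pab.not_avoids_of_intervalBetween hle hadj hc.symm hpab
  · exact pbc.not_avoids_of_intervalBetween hle hadj ha hpbc

/-- A chordal graph that is an interval graph contains no asteroidal triple. -/
theorem interval_no_asteroidal_triple [Fintype V] (G : SimpleGraph V)
    (hG : IsChordal G) (hI : IsIntervalGraph G) :
    ∀ a b c : V, ¬ IsAsteroidalTriple G a b c :=
  interval_no_asteroidal_triple_general G hI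
end

section
/- Let G be a chordal graph with clique tree T, let u, v be non-adjacent vertices, and suppose every edge label of the tree path between a clique containing u and a clique containing v contains a vertex not adjacent to z. Then there is a path in G from u to v avoiding the closed neighborhood of z. -/
open SimpleGraph

variable {V : Type*}

/-
Consecutive edges `Q₁Q₂`, `Q₂Q₃` of the tree path have label vertices `x₁ ∈ Q₁ ∩ Q₂` and
`x₂ ∈ Q₂ ∩ Q₃` outside `N[z]`; both lie in the clique `Q₂`, so they are equal or adjacent.
Chaining `u`, the chosen label vertices and `v` therefore gives a walk outside `N[z]`.
-/

namespace SimpleGraph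

variable {G : SimpleGraph V} {P : V → Prop}

lemma IsClique.exists_walk_forall_support {S : Set V} (hS : G.IsClique S) {u v : V}
    (hu : u ∈ S) (hv : v ∈ S) (hPu : P u) (hPv : P v) :
    ∃ p : G.Walk u v, ∀ x ∈ p.support, P x := by
  rcases eq_or_ne u v with rfl | huv
  · exact ⟨.nil, by simpa using hPu⟩
  · refine ⟨(hS hu hv huv).toWalk, ?_⟩
    simp [hPu, hPv]

lemma exists_walk_forall_support_trans {u v w : V}
    (huv : ∃ p : G.Walk u v, ∀ x ∈ p.support, P x)
    (hvw : ∃ q : G.Walk v w, ∀ x ∈ q.support, P x) :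
    ∃ r : G.Walk u w, ∀ x ∈ r.support, P x := by
  obtain ⟨p, hp⟩ := huv
  obtain ⟨q, hq⟩ := hvw
  refine ⟨p.append q, fun x hx => ?_⟩
  rcases Walk.mem_support_append_iff p q |>.mp hx with hx | hx
  exacts [hp x hx, hq x hx]

lemma Walk.exists_walk_forall_support_of_labels {ι : Type*} {H : SimpleGraph ι}
    {Q : ι → Set V} (hQ : ∀ i, G.IsClique (Q i)) {i j : ι} (p : H.Walk i j)
    (hlab : ∀ a b, s(a, b) ∈ p.edges → ∃ x ∈ Q a ∩ Q b, P x)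
    {u v : V} (hu : u ∈ Q i) (hv : v ∈ Q j) (hPu : P u) (hPv : P v) :
    ∃ w : G.Walk u v, ∀ x ∈ w.support, P x := by
  induction p generalizing u with
  | nil => exact (hQ _).exists_walk_forall_support hu hv hPu hPv
  | @cons i k j hik q ih =>
    obtain ⟨x, ⟨hxi, hxk⟩, hPx⟩ := hlab i k (by simp)
    exact exists_walk_forall_support_trans
      ((hQ i).exists_walk_forall_support hu hxi hPu hPx)
      (ih (fun a b hab => hlab a b (by simp [hab])) hxk hv hPx)

end SimpleGraph

theorem path_avoiding_neighborhood_general (G : SimpleGraph V)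
    (T : CliqueTree G) (u v z : V)
    (hzu : z ≠ u) (hzv : z ≠ v) (hazu : ¬ G.Adj z u) (hazv : ¬ G.Adj z v)
    (Qu Qv : MaxClique G) (hu : u ∈ Qu.1) (hv : v ∈ Qv.1)
    (hlab : ∀ p : T.tree.Walk Qu Qv, p.IsPath →
      ∀ Q R : MaxClique G, s(Q, R) ∈ p.edges →
        ∃ x ∈ Q.1 ∩ R.1, x ≠ z ∧ ¬ G.Adj z x) :
    ∃ p : G.Walk u v, ∀ x ∈ p.support, x ≠ z ∧ ¬ G.Adj z x := by
  obtain ⟨p, hp⟩ := (T.isTree.connected Qu Qv).exists_isPath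
  exact p.exists_walk_forall_support_of_labels (fun Q => Q.2.1) (hlab p hp)
    hu hv ⟨hzu.symm, hazu⟩ ⟨hzv.symm, hazv⟩

/-- If every edge label of the tree path between a clique containing `u` and a clique
containing `v` contains a vertex outside the closed neighborhood of `z` (and `u, v`
are themselves outside it), then there is a walk from `u` to `v` avoiding the closed
neighborhood of `z`. -/
theorem path_avoiding_neighborhood [Fintype V] (G : SimpleGraph V) (hG : IsChordal G)
    (T : CliqueTree G) (u v z : V) (huv : u ≠ v) (hadj : ¬ G.Adj u v)
    (hzu : z ≠ u) (hzv : z ≠ v) (hazu : ¬ G.Adj z u) (hazv : ¬ G.Adj z v)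
    (Qu Qv : MaxClique G) (hu : u ∈ Qu.1) (hv : v ∈ Qv.1)
    (hlab : ∀ p : T.tree.Walk Qu Qv, p.IsPath →
      ∀ Q R : MaxClique G, s(Q, R) ∈ p.edges →
        ∃ x ∈ Q.1 ∩ R.1, x ≠ z ∧ ¬ G.Adj z x) :
    ∃ p : G.Walk u v, ∀ x ∈ p.support, x ≠ z ∧ ¬ G.Adj z x :=
  path_avoiding_neighborhood_general G T u v z hzu hzv hazu hazv Qu Qv hu hv hlab
end
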